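/- arXiv:2011.03291 — 3 statements merged into one kernel-verified Lean document; each statement's English description precedes it below -/
import Mathlib

section
/- In any weighted tree T on vertex set V where for every pair (u,v) the weight of the minimum-weight edge on the tree path between u and v equals the (u,v)-mincut value of an underlying undirected unweighted graph G with m edges (a Gomory–Hu tree), the sum of weights of all tree edges is at least m and at most 2m. -/
open Finset

/-- Number of edges crossing the cut `(S, V \ S)` in a finite undirected
multigraph given by a symmetric edge-multiplicity function `e`. -/
def crossCount {V : Type*} [Fintype V] [DecidableEq V]
    (e : V → V → ℕ) (S : Finset V) : ℕ :=
  ∑ u ∈ S, ∑ v ∈ Sᶜ, e u v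

/-- `k` is the value of the minimum `(a,b)`-cut: some cut separating `a` from
`b` has `k` crossing edges, and every such cut has at least `k`. -/
def IsMinCutValue {V : Type*} [Fintype V] [DecidableEq V]
    (e : V → V → ℕ) (a b : V) (k : ℕ) : Prop :=
  (∃ S : Finset V, a ∈ S ∧ b ∉ S ∧ crossCount e S = k) ∧
    ∀ S : Finset V, a ∈ S → b ∉ S → k ≤ crossCount e S

/-
Lower bound: every edge `uv` of `G` with `u ≠ v` is separated by some edge of the tree path
from `u` to `v`, and deleting a tree edge `ab` leaves two sides which are both minimum
`(a,b)`-cuts, so the edges of `G` it separates number `2 w(ab)` when counted from both ends.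
Upper bound: rooting `T` at `r` and sending each tree edge to its endpoint cut off from `r`
is injective, and `w(ab)` is at most the degree of either endpoint (a singleton cut).
-/

namespace SimpleGraph

variable {V : Type*} {G : SimpleGraph V}

theorem Walk.reachable_deleteEdges_or (a b : V) {u v : V} (q : G.Walk u v) :
    (G.deleteEdges {s(a, b)}).Reachable u v ∨ (G.deleteEdges {s(a, b)}).Reachable a v ∨
      (G.deleteEdges {s(a, b)}).Reachable b v := by
  induction q with
  | nil => exact .inl .rfl
  | @cons u x v hux q ih =>
    by_cases hedge : s(u, x) = s(a, b)
    · rcases Sym2.eq_iff.mp hedge with ⟨rfl, rfl⟩ | ⟨rfl, rfl⟩ <;> tauto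
    · have hadj : (G.deleteEdges {s(a, b)}).Adj u x := by simp [hux, hedge]
      exact ih.imp_left hadj.reachable.trans

theorem Preconnected.reachable_deleteEdges_left_or_right (hG : G.Preconnected) (a b v : V) :
    (G.deleteEdges {s(a, b)}).Reachable a v ∨ (G.deleteEdges {s(a, b)}).Reachable b v := by
  obtain ⟨q⟩ := hG a v
  rcases q.reachable_deleteEdges_or a b with h | h | h <;> tauto

theorem IsAcyclic.not_reachable_deleteEdges_of_adj (hG : G.IsAcyclic) {a b : V}
    (hab : G.Adj a b) : ¬ (G.deleteEdges {s(a, b)}).Reachable a b :=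
  isAcyclic_iff_forall_adj_isBridge.mp hG hab

theorem Preconnected.reachable_deleteEdges_iff (hG : G.Preconnected) (a b u v : V) :
    (G.deleteEdges {s(a, b)}).Reachable u v ↔
      ((G.deleteEdges {s(a, b)}).Reachable a u ↔ (G.deleteEdges {s(a, b)}).Reachable a v) := by
  have hside := hG.reachable_deleteEdges_left_or_right a b
  constructor
  · intro huv
    exact ⟨fun hu => hu.trans huv, fun hv => hv.trans huv.symm⟩
  · intro hiff
    by_cases hu : (G.deleteEdges {s(a, b)}).Reachable a u
    · exact hu.symm.trans (hiff.mp hu)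
    · have hv : ¬ (G.deleteEdges {s(a, b)}).Reachable a v := mt hiff.mpr hu
      exact ((hside u).resolve_left hu).symm.trans ((hside v).resolve_left hv)

theorem IsTree.reachable_deleteEdges_right_iff (hG : G.IsTree) {a b : V} (hab : G.Adj a b)
    (v : V) : (G.deleteEdges {s(a, b)}).Reachable b v ↔
      ¬ (G.deleteEdges {s(a, b)}).Reachable a v := by
  have hbridge := hG.isAcyclic.not_reachable_deleteEdges_of_adj hab
  rw [hG.connected.preconnected.reachable_deleteEdges_iff a b]
  tauto

theorem IsTree.exists_not_reachable_deleteEdges (hG : G.IsTree) {u v : V} (huv : u ≠ v) :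
    ∃ p ∈ G.edgeSet, ¬ (G.deleteEdges {p}).Reachable u v := by
  classical
  obtain ⟨P, hP, hP_unique⟩ := hG.existsUnique_path u v
  obtain ⟨p, hp⟩ :=
    List.exists_mem_of_ne_nil _ (Walk.edges_eq_nil.not.mpr (Walk.not_nil_of_ne huv))
  refine ⟨p, P.edges_subset_edgeSet hp, ?_⟩
  induction p using Sym2.ind with
  | _ a b =>
    rw [reachable_deleteEdges_iff_exists_walk]
    rintro ⟨q, hq⟩
    rw [← hP_unique _ q.bypass_isPath] at hp
    exact hq (q.edges_bypass_subset_edges hp)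

theorem IsTree.exists_mem_not_reachable_deleteEdges (hG : G.IsTree) (r : V) {p : Sym2 V}
    (hp : p ∈ G.edgeSet) : ∃ x ∈ p, ¬ (G.deleteEdges {p}).Reachable r x := by
  induction p using Sym2.ind with
  | _ a b =>
    by_cases hra : (G.deleteEdges {s(a, b)}).Reachable r a
    · exact ⟨b, Sym2.mem_mk_right a b,
        fun hrb => hG.isAcyclic.not_reachable_deleteEdges_of_adj hp (hra.symm.trans hrb)⟩
    · exact ⟨a, Sym2.mem_mk_left a b, hra⟩

theorem Walk.reachable_deleteEdges_of_notMem_support {u v x : V} (q : G.Walk u v)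
    (hx : x ∉ q.support) {p : Sym2 V} (hxp : x ∈ p) : (G.deleteEdges {p}).Reachable u v := by
  obtain ⟨y, rfl⟩ := Sym2.mem_iff_exists.mp hxp
  refine ⟨q.toDeleteEdges {s(x, y)} fun e he hep => hx ?_⟩
  rw [Set.mem_singleton_iff] at hep
  exact q.fst_mem_support_of_mem_edges (hep ▸ he)

/-- If `x` were cut off from `r` by two distinct tree edges at `x`, then `r` would reach `x`
through the far endpoint of the first one while avoiding the second. -/
theorem IsTree.eq_of_mem_of_not_reachable_deleteEdges (hG : G.IsTree) {r x : V}
    {p₁ p₂ : Sym2 V} (hp₁ : p₁ ∈ G.edgeSet) (hx₁ : x ∈ p₁)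
    (hr₁ : ¬ (G.deleteEdges {p₁}).Reachable r x) (hx₂ : x ∈ p₂)
    (hr₂ : ¬ (G.deleteEdges {p₂}).Reachable r x) : p₁ = p₂ := by
  classical
  by_contra hne
  obtain ⟨a, rfl⟩ := Sym2.mem_iff_exists.mp hx₁
  obtain ⟨q⟩ : (G.deleteEdges {s(x, a)}).Reachable r a :=
    ((hG.connected.preconnected.reachable_deleteEdges_left_or_right x a r).resolve_left
      (fun h => hr₁ h.symm)).symm
  have hxq : x ∉ q.support := fun hx => hr₁ ⟨q.takeUntil x hx⟩
  have hra : (G.deleteEdges {p₂}).Reachable r a :=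
    (q.reachable_deleteEdges_of_notMem_support hxq hx₂).mono
      (deleteEdges_mono (deleteEdges_le _))
  have hax : (G.deleteEdges {p₂}).Adj a x := by
    simp only [deleteEdges_adj, Set.mem_singleton_iff]
    exact ⟨(mem_edgeSet G).mp hp₁ |>.symm, fun h => hne (Sym2.eq_swap.trans h)⟩
  exact hr₂ (hra.trans hax.reachable)

theorem IsTree.exists_injOn_mem (hG : G.IsTree) :
    ∃ f : Sym2 V → V, (∀ p ∈ G.edgeSet, f p ∈ p) ∧ Set.InjOn f G.edgeSet := by
  obtain ⟨r⟩ := hG.connected.nonempty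
  have hchoice (p : Sym2 V) :
      ∃ x, p ∈ G.edgeSet → x ∈ p ∧ ¬ (G.deleteEdges {p}).Reachable r x := by
    by_cases hp : p ∈ G.edgeSet
    · obtain ⟨x, hx⟩ := hG.exists_mem_not_reachable_deleteEdges r hp
      exact ⟨x, fun _ => hx⟩
    · exact ⟨r, fun h => absurd h hp⟩
  choose f hf using hchoice
  refine ⟨f, fun p hp => (hf p hp).1, fun p₁ hp₁ p₂ hp₂ heq => ?_⟩
  obtain ⟨hx₁, hr₁⟩ := hf p₁ hp₁
  obtain ⟨hx₂, hr₂⟩ := hf p₂ hp₂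
  rw [heq] at hx₁ hr₁
  exact hG.eq_of_mem_of_not_reachable_deleteEdges hp₁ hx₁ hr₁ hx₂ hr₂

end SimpleGraph

/-- The number of edges of the multigraph `e` (each counted from both ends) joining
different connected components of `H`. -/
noncomputable def separatedCount {V : Type*} [Fintype V] (e : V → V → ℕ) (H : SimpleGraph V) :
    ℕ :=
  ∑ u, ∑ v, {v | ¬ H.Reachable u v}.indicator (e u) v

theorem crossCount_add_crossCount_compl {V : Type*} [Fintype V] [DecidableEq V]
    (e : V → V → ℕ) (S : Finset V) :
    crossCount e S + crossCount e Sᶜ =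
      ∑ u, ∑ v, if (u ∈ S ↔ v ∈ S) then 0 else e u v := by
  rw [← sum_add_sum_compl S]
  simp only [crossCount, compl_compl]
  congr 1 <;> refine sum_congr rfl fun u hu => ?_ <;>
    simp_all [sum_ite, filter_not, compl_eq_univ_sdiff]

open scoped Classical in
theorem SimpleGraph.IsTree.separatedCount_deleteEdges {V : Type*} [Fintype V] [DecidableEq V]
    {G : SimpleGraph V} (hG : G.IsTree) (e : V → V → ℕ) {a b : V} (hab : G.Adj a b) :
    separatedCount e (G.deleteEdges {s(a, b)}) =
      crossCount e (univ.filter fun v => (G.deleteEdges {s(a, b)}).Reachable a v) +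
        crossCount e (univ.filter fun v => (G.deleteEdges {s(a, b)}).Reachable b v) := by
  set S := univ.filter fun v => (G.deleteEdges {s(a, b)}).Reachable a v
  have hSc : (univ.filter fun v => (G.deleteEdges {s(a, b)}).Reachable b v) = Sᶜ := by
    ext v
    simp [S, hG.reachable_deleteEdges_right_iff hab]
  rw [hSc, crossCount_add_crossCount_compl]
  refine sum_congr rfl fun u _ => sum_congr rfl fun v _ => ?_
  have hreach : (G.deleteEdges {s(a, b)}).Reachable u v ↔ (u ∈ S ↔ v ∈ S) := by
    simpa only [S, mem_filter, mem_univ, true_and] using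
      hG.connected.preconnected.reachable_deleteEdges_iff a b u v
  by_cases h : (G.deleteEdges {s(a, b)}).Reachable u v
  · rw [Set.indicator_of_notMem (not_not.mpr h), if_pos (hreach.mp h)]
  · rw [Set.indicator_of_mem h, if_neg (mt hreach.mpr h)]

theorem SimpleGraph.IsTree.sum_sum_le_sum_separatedCount {V : Type*} [Fintype V]
    {G : SimpleGraph V} [Fintype G.edgeSet] (hG : G.IsTree) (e : V → V → ℕ)
    (hloop : ∀ v, e v v = 0) :
    ∑ u, ∑ v, e u v ≤ ∑ p ∈ G.edgeFinset, separatedCount e (G.deleteEdges {p}) := by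
  calc ∑ u, ∑ v, e u v
      ≤ ∑ u, ∑ v, ∑ p ∈ G.edgeFinset,
          {v | ¬ (G.deleteEdges {p}).Reachable u v}.indicator (e u) v := by
        refine sum_le_sum fun u _ => sum_le_sum fun v _ => ?_
        by_cases huv : u = v
        · simp [huv, hloop]
        obtain ⟨p, hp, hsep⟩ := hG.exists_not_reachable_deleteEdges huv
        calc e u v = {v | ¬ (G.deleteEdges {p}).Reachable u v}.indicator (e u) v :=
              (Set.indicator_of_mem hsep _).symm
          _ ≤ _ := single_le_sum
              (f := fun p => {v | ¬ (G.deleteEdges {p}).Reachable u v}.indicator (e u) v)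
              (fun _ _ => Nat.zero_le _) (G.mem_edgeFinset.mpr hp)
    _ = ∑ p ∈ G.edgeFinset, separatedCount e (G.deleteEdges {p}) :=
        (sum_congr rfl fun _ _ => sum_comm).trans sum_comm

theorem IsMinCutValue.le_sum_left {V : Type*} [Fintype V] [DecidableEq V] {e : V → V → ℕ}
    {a b : V} {k : ℕ} (h : IsMinCutValue e a b k) (hab : a ≠ b) : k ≤ ∑ v, e a v := by
  refine (h.2 {a} (mem_singleton_self a) (by simpa using hab.symm)).trans ?_
  rw [crossCount, sum_singleton]
  exact sum_le_sum_of_subset (subset_univ _)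

open scoped Classical in
theorem sum_sum_le_two_mul_sum_weight {V : Type*} [Fintype V] [DecidableEq V]
    {e : V → V → ℕ} (hloop : ∀ v, e v v = 0) {T : SimpleGraph V} (hT : T.IsTree)
    {w : V → V → ℕ} (hwsymm : ∀ a b, w a b = w b a)
    (hpart : ∀ a b, T.Adj a b →
      crossCount e (univ.filter fun v => (T.deleteEdges {s(a, b)}).Reachable a v) = w a b) :
    ∑ u, ∑ v, e u v ≤ 2 * ∑ p ∈ T.edgeFinset, Sym2.lift ⟨w, hwsymm⟩ p := by
  have hweight : ∀ p ∈ T.edgeFinset,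
      separatedCount e (T.deleteEdges {p}) = 2 * Sym2.lift ⟨w, hwsymm⟩ p := by
    intro p hp
    induction p using Sym2.ind with
    | _ a b =>
      have hab : T.Adj a b := T.mem_edgeFinset.mp hp
      have hba := hpart b a hab.symm
      rw [Sym2.eq_swap, hwsymm] at hba
      rw [hT.separatedCount_deleteEdges e hab, hpart a b hab, hba, Sym2.lift_mk, two_mul]
  calc ∑ u, ∑ v, e u v ≤ ∑ p ∈ T.edgeFinset, separatedCount e (T.deleteEdges {p}) :=
        hT.sum_sum_le_sum_separatedCount e hloop
    _ = 2 * ∑ p ∈ T.edgeFinset, Sym2.lift ⟨w, hwsymm⟩ p := by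
        rw [mul_sum]
        exact sum_congr rfl hweight

theorem sum_weight_le_sum_sum {V : Type*} [Fintype V] [DecidableEq V] {e : V → V → ℕ}
    {T : SimpleGraph V} [Fintype T.edgeSet] (hT : T.IsTree) {w : V → V → ℕ}
    (hwsymm : ∀ a b, w a b = w b a) (hGH : ∀ a b, T.Adj a b → IsMinCutValue e a b (w a b)) :
    ∑ p ∈ T.edgeFinset, Sym2.lift ⟨w, hwsymm⟩ p ≤ ∑ u, ∑ v, e u v := by
  have hdeg :
      ∀ p ∈ T.edgeFinset, ∀ x ∈ p, Sym2.lift ⟨w, hwsymm⟩ p ≤ ∑ v, e x v := by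
    intro p hp x hx
    induction p using Sym2.ind with
    | _ a b =>
      have hab : T.Adj a b := T.mem_edgeFinset.mp hp
      rcases Sym2.mem_iff.mp hx with rfl | rfl
      · exact (hGH x b hab).le_sum_left hab.ne
      · show w a x ≤ _
        rw [hwsymm]
        exact (hGH x a hab.symm).le_sum_left hab.ne'
  obtain ⟨f, hf_mem, hf_inj⟩ := hT.exists_injOn_mem
  calc ∑ p ∈ T.edgeFinset, Sym2.lift ⟨w, hwsymm⟩ p
      ≤ ∑ p ∈ T.edgeFinset, ∑ v, e (f p) v :=
        sum_le_sum fun p hp => hdeg p hp (f p) (hf_mem p (T.mem_edgeFinset.mp hp))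
    _ = ∑ x ∈ T.edgeFinset.image f, ∑ v, e x v :=
        (sum_image (f := fun x => ∑ v, e x v) (by rwa [T.coe_edgeFinset])).symm
    _ ≤ ∑ x, ∑ v, e x v := sum_le_sum_of_subset (subset_univ _)

open scoped Classical in
theorem gomory_hu_tree_total_weight_general {V : Type*} [Fintype V] [DecidableEq V]
    (e : V → V → ℕ) (hloop : ∀ v, e v v = 0)
    (m : ℕ) (hm : 2 * m = ∑ u, ∑ v, e u v)
    (T : SimpleGraph V) (hT : T.IsTree)
    (w : V → V → ℕ) (hwsymm : ∀ a b, w a b = w b a)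
    (hGH : ∀ a b, T.Adj a b → IsMinCutValue e a b (w a b))
    (hpart : ∀ a b, T.Adj a b →
      crossCount e (univ.filter
        (fun v => (T.deleteEdges {s(a, b)}).Reachable a v)) = w a b) :
    m ≤ ∑ p ∈ T.edgeFinset, Sym2.lift ⟨w, hwsymm⟩ p ∧
      ∑ p ∈ T.edgeFinset, Sym2.lift ⟨w, hwsymm⟩ p ≤ 2 * m := by
  have hlower := sum_sum_le_two_mul_sum_weight hloop hT hwsymm hpart
  have hupper := sum_weight_le_sum_sum hT hwsymm hGH
  constructor <;> omega

open scoped Classical in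
/-- **Gomory–Hu tree weight is Θ(m).**  Let `G` be a finite undirected
unweighted multigraph (edge multiplicities `e`, handshake `2m = Σ deg`), and
let `T` be a Gomory–Hu tree of `G`: a tree on the vertex set whose every edge
`(a,b)` has weight `w a b` equal to the `(a,b)`-mincut value of `G`, and such
that removing the edge `(a,b)` from `T` partitions the vertices into a minimum
`(a,b)`-cut of `G`.  Then the sum of the weights of all tree edges is at least
`m` and at most `2m`. -/
theorem gomory_hu_tree_total_weight {V : Type*} [Fintype V] [DecidableEq V]
    (e : V → V → ℕ) (hesymm : ∀ u v, e u v = e v u) (hloop : ∀ v, e v v = 0)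
    (m : ℕ) (hm : 2 * m = ∑ u, ∑ v, e u v)
    (T : SimpleGraph V) (hT : T.IsTree)
    (w : V → V → ℕ) (hwsymm : ∀ a b, w a b = w b a)
    (hGH : ∀ a b, T.Adj a b → IsMinCutValue e a b (w a b))
    (hpart : ∀ a b, T.Adj a b →
      crossCount e (univ.filter
        (fun v => (T.deleteEdges {s(a, b)}).Reachable a v)) = w a b) :
    m ≤ ∑ p ∈ T.edgeFinset, Sym2.lift ⟨w, hwsymm⟩ p ∧
      ∑ p ∈ T.edgeFinset, Sym2.lift ⟨w, hwsymm⟩ p ≤ 2 * m :=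
  gomory_hu_tree_total_weight_general e hloop m hm T hT w hwsymm hGH hpart
end

section
/- Insertion of an edge (x, y) into an undirected unweighted graph G increases the value of the (s,t)-mincut (by exactly one) if and only if x belongs to the nearest mincut from s to t and y belongs to the nearest mincut from t to s, or vice versa. -/
open Finset

/-- The value of the minimum `(s,t)`-cut of the multigraph `e`. -/
noncomputable def minCutVal {V : Type*} [Fintype V] [DecidableEq V]
    (e : V → V → ℕ) (s t : V) : ℕ :=
  sInf {k | ∃ S : Finset V, s ∈ S ∧ t ∉ S ∧ crossCount e S = k}

/-- `A` is the `s`-side of the nearest mincut from `s` to `t`: a minimum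
`(s,t)`-cut whose `s`-side is contained in the `s`-side of every minimum
`(s,t)`-cut. -/
def IsNearestMincutSide {V : Type*} [Fintype V] [DecidableEq V]
    (e : V → V → ℕ) (s t : V) (A : Finset V) : Prop :=
  s ∈ A ∧ t ∉ A ∧ crossCount e A = minCutVal e s t ∧
    ∀ B : Finset V, s ∈ B → t ∉ B → crossCount e B = minCutVal e s t → A ⊆ B

/-- The multigraph obtained from `e` by inserting one extra copy of the
(undirected) edge `(x,y)`. -/
def insertEdge {V : Type*} [DecidableEq V] (e : V → V → ℕ) (x y : V) :
    V → V → ℕ :=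
  fun u v => e u v + (if (u = x ∧ v = y) ∨ (u = y ∧ v = x) then 1 else 0)

lemma crossCount_compl {V : Type*} [Fintype V] [DecidableEq V]
    (e : V → V → ℕ) (hsymm : ∀ u v, e u v = e v u) (S : Finset V) :
    crossCount e Sᶜ = crossCount e S := by
  unfold crossCount
  rw [compl_compl, Finset.sum_comm]
  exact Finset.sum_congr rfl fun u _ => Finset.sum_congr rfl fun v _ => hsymm v u

lemma minCutVal_comm {V : Type*} [Fintype V] [DecidableEq V]
    (e : V → V → ℕ) (hsymm : ∀ u v, e u v = e v u) (s t : V) :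
    minCutVal e t s = minCutVal e s t := by
  unfold minCutVal
  congr 1
  ext k
  constructor
  · rintro ⟨S, hs, ht, hc⟩
    exact ⟨Sᶜ, Finset.mem_compl.mpr ht, fun h => (Finset.mem_compl.mp h) hs,
      by rw [crossCount_compl e hsymm]; exact hc⟩
  · rintro ⟨S, hs, ht, hc⟩
    exact ⟨Sᶜ, Finset.mem_compl.mpr ht, fun h => (Finset.mem_compl.mp h) hs,
      by rw [crossCount_compl e hsymm]; exact hc⟩

lemma crossCount_insertEdge {V : Type*} [Fintype V] [DecidableEq V]
    (e : V → V → ℕ) (x y : V) (S : Finset V) :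
    crossCount (insertEdge e x y) S =
      crossCount e S + ((if x ∈ S ∧ y ∉ S then 1 else 0)
        + (if y ∈ S ∧ x ∉ S then 1 else 0)) := by
  unfold crossCount insertEdge
  simp only [Finset.sum_add_distrib]
  congr 1
  have key : ∑ u ∈ S, ∑ v ∈ Sᶜ,
      (if (u = x ∧ v = y) ∨ (u = y ∧ v = x) then (1:ℕ) else 0)
      = ∑ u ∈ S, ∑ v ∈ Sᶜ,
        ((if u = x then 1 else 0) * (if v = y then 1 else 0)
          + (if u = y then 1 else 0) * (if v = x then 1 else 0)) := by
    refine Finset.sum_congr rfl fun u hu => Finset.sum_congr rfl fun v hv => ?_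
    have huv : u ≠ v := fun h => (Finset.mem_compl.mp hv) (h ▸ hu)
    by_cases hux : u = x <;> by_cases hvy : v = y <;> by_cases huy : u = y <;>
      by_cases hvx : v = x <;> simp_all
  rw [key]
  simp only [Finset.sum_add_distrib, ← Finset.sum_mul, ← Finset.mul_sum]
  rw [Finset.sum_ite_eq' S x (fun _ => (1:ℕ)), Finset.sum_ite_eq' S y (fun _ => (1:ℕ)),
    Finset.sum_ite_eq' Sᶜ y (fun _ => (1:ℕ)), Finset.sum_ite_eq' Sᶜ x (fun _ => (1:ℕ))]
  simp only [Finset.mem_compl]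
  split_ifs <;> simp_all


/-- **Picard–Queyranne.**  Insertion of an edge `(x,y)` into an undirected
unweighted multigraph increases the value of the `(s,t)`-mincut (by exactly
one) if and only if `x` lies in the nearest mincut from `s` to `t` and `y`
lies in the nearest mincut from `t` to `s`, or vice versa. -/
theorem edge_insertion_increases_mincut_iff {V : Type*} [Fintype V]
    [DecidableEq V] (e : V → V → ℕ) (hsymm : ∀ u v, e u v = e v u)
    (s t : V) (hst : s ≠ t) (x y : V)
    (A B : Finset V)
    (hA : IsNearestMincutSide e s t A) (hB : IsNearestMincutSide e t s B) :
    minCutVal (insertEdge e x y) s t = minCutVal e s t + 1 ↔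
      ((x ∈ A ∧ y ∈ B) ∨ (y ∈ A ∧ x ∈ B)) := by
  obtain ⟨hsA, htA, hcA, hminA⟩ := hA
  obtain ⟨htB, hsB, hcB, hminB⟩ := hB
  set k := minCutVal e s t with hk
  have hts : minCutVal e t s = k := minCutVal_comm e hsymm s t
  have hBk : crossCount e B = k := by rw [hcB, hts]
  -- every mincut s-side contains A and its complement contains B
  have hkey : ∀ S : Finset V, s ∈ S → t ∉ S → crossCount e S = k →
      A ⊆ S ∧ B ⊆ Sᶜ := by
    intro S hs ht hc
    refine ⟨hminA S hs ht hc, hminB Sᶜ (Finset.mem_compl.mpr ht)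
      (fun h => (Finset.mem_compl.mp h) hs) ?_⟩
    rw [crossCount_compl e hsymm, hc, hts]
  have hAB : A ⊆ Bᶜ := by
    have := hkey Bᶜ (Finset.mem_compl.mpr hsB)
      (fun h => (Finset.mem_compl.mp h) htB)
      (by rw [crossCount_compl e hsymm, hBk])
    exact this.1
  have hBA : B ⊆ Aᶜ := (hkey A hsA htA hcA).2
  -- k is a lower bound for crossCount of any (s,t)-cut
  have hlow : ∀ S : Finset V, s ∈ S → t ∉ S → k ≤ crossCount e S := by
    intro S hs ht
    exact Nat.sInf_le ⟨S, hs, ht, rfl⟩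
  constructor
  · -- ⇒, by contraposition
    intro hEq
    by_contra hn
    push_neg at hn
    obtain ⟨hn1, hn2⟩ := hn
    -- find a mincut not crossed by (x,y)
    obtain ⟨S, hs, ht, hc, hx, hy⟩ :
        ∃ S : Finset V, s ∈ S ∧ t ∉ S ∧ crossCount e S = k ∧
          ¬(x ∈ S ∧ y ∉ S) ∧ ¬(y ∈ S ∧ x ∉ S) := by
      by_cases hxA : x ∈ A
      · -- x ∉ B, and y ∉ B by hn1; use Bᶜ
        have hxB : x ∈ Bᶜ := hAB hxA
        have hyB : y ∉ B := fun h => hn1 hxA h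
        exact ⟨Bᶜ, Finset.mem_compl.mpr hsB,
          fun h => (Finset.mem_compl.mp h) htB,
          by rw [crossCount_compl e hsymm, hBk],
          fun h => h.2 (Finset.mem_compl.mpr hyB),
          fun h => h.2 hxB⟩
      · by_cases hyA : y ∈ A
        · have hyB : y ∈ Bᶜ := hAB hyA
          have hxB : x ∉ B := fun h => hn2 hyA h
          exact ⟨Bᶜ, Finset.mem_compl.mpr hsB,
            fun h => (Finset.mem_compl.mp h) htB,
            by rw [crossCount_compl e hsymm, hBk],
            fun h => h.2 hyB,
            fun h => h.2 (Finset.mem_compl.mpr hxB)⟩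
        · exact ⟨A, hsA, htA, hcA, fun h => hxA h.1, fun h => hyA h.1⟩
    have : minCutVal (insertEdge e x y) s t ≤ k := by
      apply Nat.sInf_le
      refine ⟨S, hs, ht, ?_⟩
      rw [crossCount_insertEdge, if_neg hx, if_neg hy, hc]
      omega
    omega
  · -- ⇐
    intro h
    have hmem : crossCount (insertEdge e x y) A = k + 1 := by
      rw [crossCount_insertEdge, hcA]
      rcases h with ⟨hx, hy⟩ | ⟨hy, hx⟩
      · have hyA : y ∉ A := fun hyA => (Finset.mem_compl.mp (hBA hy)) hyA
        rw [if_pos ⟨hx, hyA⟩, if_neg (fun h => hyA h.1)]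
      · have hxA : x ∉ A := fun hxA => (Finset.mem_compl.mp (hBA hx)) hxA
        rw [if_neg (fun h => hxA h.1), if_pos ⟨hy, hxA⟩]
    have hub : minCutVal (insertEdge e x y) s t ≤ k + 1 :=
      Nat.sInf_le ⟨A, hsA, htA, hmem⟩
    have hlb : ∀ S : Finset V, s ∈ S → t ∉ S →
        k + 1 ≤ crossCount (insertEdge e x y) S := by
      intro S hs ht
      rw [crossCount_insertEdge]
      have hge := hlow S hs ht
      rcases Nat.lt_or_ge k (crossCount e S) with hlt | hle
      · omega
      · have hc : crossCount e S = k := le_antisymm hle hge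
        obtain ⟨hAS, hBS⟩ := hkey S hs ht hc
        rcases h with ⟨hx, hy⟩ | ⟨hy, hx⟩
        · have : x ∈ S := hAS hx
          have : y ∉ S := Finset.mem_compl.mp (hBS hy)
          rw [if_pos ⟨hAS hx, this⟩]; omega
        · have : y ∈ S := hAS hy
          have : x ∉ S := Finset.mem_compl.mp (hBS hx)
          rw [if_neg (fun h => h.2 (hAS hy)), if_pos ⟨hAS hy, this⟩]; omega
    have hne : {m | ∃ S : Finset V, s ∈ S ∧ t ∉ S ∧
        crossCount (insertEdge e x y) S = m}.Nonempty :=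
      ⟨k + 1, A, hsA, htA, hmem⟩
    have hmem' := Nat.sInf_mem hne
    obtain ⟨S, hs, ht, hc⟩ := hmem'
    have := hlb S hs ht
    unfold minCutVal
    unfold minCutVal at hub
    omega
end

section
/- Let T̂ be a weighted tree with positive integer edge weights and let the hierarchy tree T be built recursively: at each step, remove all edges of minimum weight c_min (say k of them), obtaining k+1 subtrees, create a new node μ joined to the recursively built roots of the subtrees by k+1 edges each of weight c_min. Then if T̂ has total weight W, the hierarchy tree T has total weight at most 2W. -/
/-- The recursive construction of the hierarchy tree from a weighted
(Gomory–Hu) tree, abstracted to the multiset of its edge weights.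
`HierWeight M W` means: starting from a tree whose multiset of edge weights is
`M`, the recursive construction (remove all `k ≥ 1` edges of minimum weight
`c`, obtaining `k + 1` subtrees, and join a new node to their recursively
built roots by `k + 1` edges of weight `c`) can produce a hierarchy tree of
total edge weight `W`.  A single-node tree has `M = 0` and weight `0`; in a
recursive step the remaining edges (all of weight `> c`) are distributed among
the `k + 1` subtrees. -/
inductive HierWeight : Multiset ℕ → ℕ → Prop where
  | nil : HierWeight 0 0
  | step (c k : ℕ) (hk : 0 < k) (parts : List (Multiset ℕ × ℕ))
      (hlen : parts.length = k + 1)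
      (hmin : ∀ p ∈ parts, ∀ x ∈ p.1, c < x)
      (hsub : ∀ p ∈ parts, HierWeight p.1 p.2) :
      HierWeight (Multiset.replicate k c + (parts.map Prod.fst).sum)
        ((k + 1) * c + (parts.map Prod.snd).sum)

lemma sum_sum_map_fst (l : List (Multiset ℕ × ℕ)) :
    (l.map Prod.fst).sum.sum = (l.map (fun p => p.1.sum)).sum := by
  induction l with
  | nil => simp
  | cons a t iht => simp [iht]

/-- **The hierarchy tree has total weight at most twice that of the
Gomory–Hu tree.**  If the original tree has positive edge weights with total
weight `W = M.sum`, then the hierarchy tree built by the recursive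
construction has total weight at most `2W`, since each batch of `k` removed
edges of weight `c_min` contributes `k·c_min` to `W` but only
`(k+1)·c_min ≤ 2k·c_min` to the hierarchy tree. -/
theorem hierarchy_tree_weight_le_twice (M : Multiset ℕ) (W : ℕ)
    (hpos : ∀ x ∈ M, 0 < x) (h : HierWeight M W) :
    W ≤ 2 * M.sum := by
  clear hpos
  induction h with
  | nil => simp
  | step c k hk parts hlen hmin hsub ih =>
    have hsum : ((parts.map Prod.snd).sum : ℕ) ≤ 2 * (parts.map (fun p => p.1.sum)).sum := by
      rw [← List.sum_map_mul_left]
      exact List.sum_le_sum ih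
    have h1 : (k + 1) * c ≤ 2 * (k * c) := by nlinarith
    have h2 : (Multiset.replicate k c + (parts.map Prod.fst).sum).sum
        = k * c + (parts.map (fun p => p.1.sum)).sum := by
      simp [Multiset.sum_replicate, smul_eq_mul, sum_sum_map_fst]
    rw [h2, Nat.mul_add]
    omega
end
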